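/- Suppose S' is bounded, A > 0 is bounded, and A(x) → 0 as |x| → ∞. If Im λ ≠ 0, then λ ∉ Σ_∞(p); i.e., there do not exist sequences (x_j, ξ_j) with |(x_j, ξ_j)| → ∞ and unit vectors u_j ∈ ℂ² such that |(p(x_j, ξ_j) − λI)u_j| → 0. In particular Σ_∞(p) ⊆ ℝ. -/

import Mathlib

/-! Write `v = (p(x, ξ) - λ) u`. The diagonal part of `p` is Hermitian, so taking the imaginary
part of `⟨u, v⟩` leaves only `Im λ ‖u‖²` and the off-diagonal term, whence
`|Im λ| ≤ 2 ‖v‖ / ‖u‖ + 2 |A x|` (the factors 2 come from the sup norm on `ℂ²`). Reading the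
rows of `v` instead bounds `|ξ|` by `|S' x| / 2 + |Re λ| + |A x| + ‖v‖ / ‖u‖`. Along a sequence
with `‖v‖ / ‖u‖ → 0` the frequency therefore stays bounded, so `|x| → ∞`, `A x → 0`, and the
first bound forces `Im λ = 0`. -/

open Complex Matrix Filter Topology

/-- The symbol of the Zakharov–Shabat operator. -/
noncomputable def zsSymbol (A : ℝ → ℝ) (S' : ℝ → ℝ) (w : ℝ × ℝ) : Matrix (Fin 2) (Fin 2) ℂ :=
  !![-(w.2 : ℂ) - (S' w.1) / 2, -Complex.I * A w.1;
     -Complex.I * A w.1, (w.2 : ℂ) - (S' w.1) / 2]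

section Norms

variable {ι : Type*} [Fintype ι]

lemma sq_norm_le_sum_sq_norm {E : Type*} [SeminormedAddCommGroup E] [Nonempty ι] (u : ι → E) :
    ‖u‖ ^ 2 ≤ ∑ i, ‖u i‖ ^ 2 := by
  obtain ⟨i, hi⟩ := (IsGreatest.pi_norm u).1
  rw [← hi]
  exact Finset.single_le_sum (fun j _ => sq_nonneg ‖u j‖) (Finset.mem_univ i)

lemma norm_star_dotProduct_le {𝕜 : Type*} [RCLike 𝕜] (u v : ι → 𝕜) :
    ‖star u ⬝ᵥ v‖ ≤ Fintype.card ι * (‖u‖ * ‖v‖) := by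
  calc ‖star u ⬝ᵥ v‖ ≤ ∑ i, ‖star (u i) * v i‖ := norm_sum_le _ _
    _ ≤ ∑ _i : ι, ‖u‖ * ‖v‖ := by
      gcongr with i
      rw [norm_mul, norm_star]
      exact mul_le_mul (norm_le_pi_norm u i) (norm_le_pi_norm v i) (norm_nonneg _) (norm_nonneg _)
    _ = _ := by simp

end Norms

lemma tendsto_fst_cocompact_of_tendsto_norm {ι E F : Type*} [SeminormedAddCommGroup E]
    [ProperSpace E] [SeminormedAddCommGroup F] {l : Filter ι} {w : ι → E × F} {C : ℝ}
    (hw : Tendsto (‖w ·‖) l atTop) (hC : ∀ᶠ j in l, ‖(w j).2‖ ≤ C) :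
    Tendsto (fun j => (w j).1) l (cocompact E) := by
  rw [← Metric.cobounded_eq_cocompact, ← tendsto_norm_atTop_iff_cobounded]
  refine tendsto_atTop_mono' l ?_ (tendsto_atTop_add_const_right l (-C) hw)
  filter_upwards [hC] with j hj
  have := norm_nonneg (w j).1
  have := norm_nonneg (w j).2
  rw [Prod.norm_def, ← sub_eq_add_neg, sub_le_iff_le_add]
  exact max_le (by linarith) (by linarith)

lemma abs_sub_half_abs_sub_abs_le (ξ s r : ℝ) : |ξ| - |s| / 2 - |r| ≤ |ξ - s / 2 - r| := by
  have h := abs_add_three (ξ - s / 2 - r) (s / 2) r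
  rw [abs_div, abs_two] at h
  ring_nf at h ⊢
  linarith

section ZakharovShabat

variable (A S' : ℝ → ℝ) (lam : ℂ) (w : ℝ × ℝ) (u : Fin 2 → ℂ)

lemma zsSymbol_mulVec_sub_smul_zero :
    (zsSymbol A S' w *ᵥ u - lam • u) 0
      = (-(w.2 : ℂ) - S' w.1 / 2 - lam) * u 0 - I * A w.1 * u 1 := by
  simp only [zsSymbol, cons_mulVec, dotProduct, Fin.sum_univ_two, cons_val_zero, cons_val_one,
    cons_val_fin_one, empty_mulVec, Pi.sub_apply, Pi.smul_apply, smul_eq_mul]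
  ring

lemma zsSymbol_mulVec_sub_smul_one :
    (zsSymbol A S' w *ᵥ u - lam • u) 1
      = -I * A w.1 * u 0 + ((w.2 : ℂ) - S' w.1 / 2 - lam) * u 1 := by
  simp only [zsSymbol, cons_mulVec, dotProduct, Fin.sum_univ_two, cons_val_zero, cons_val_one,
    cons_val_fin_one, empty_mulVec, Pi.sub_apply, Pi.smul_apply, smul_eq_mul]
  ring

lemma im_star_dotProduct_zsSymbol_mulVec_sub_smul :
    (star u ⬝ᵥ (zsSymbol A S' w *ᵥ u - lam • u)).im
      = -lam.im * ∑ i, ‖u i‖ ^ 2 - 2 * A w.1 * (star (u 0) * u 1).re := by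
  simp only [dotProduct, Fin.sum_univ_two, zsSymbol_mulVec_sub_smul_zero,
    zsSymbol_mulVec_sub_smul_one, Complex.sq_norm, Complex.normSq_apply, Pi.star_apply,
    RCLike.star_def, add_im, add_re, mul_im, mul_re, sub_im, sub_re, neg_im, neg_re, conj_re,
    conj_im, ofReal_re, ofReal_im, I_re, I_im, div_ofNat_re, div_ofNat_im]
  ring

variable {u}

lemma abs_im_le_norm_zsSymbol_mulVec_sub_smul_div (hu : u ≠ 0) :
    |lam.im| ≤ 2 * (‖zsSymbol A S' w *ᵥ u - lam • u‖ / ‖u‖) + 2 * |A w.1| := by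
  set v := zsSymbol A S' w *ᵥ u - lam • u
  have hu : 0 < ‖u‖ := norm_pos_iff.2 hu
  have hcross : ‖star (u 0) * u 1‖ ≤ ‖u‖ ^ 2 := by
    rw [norm_mul, norm_star, sq]
    exact mul_le_mul (norm_le_pi_norm u 0) (norm_le_pi_norm u 1) (norm_nonneg _) hu.le
  have hdot : ‖star u ⬝ᵥ v‖ ≤ 2 * (‖u‖ * ‖v‖) := by
    simpa using norm_star_dotProduct_le u v
  have key : |lam.im| * ‖u‖ ^ 2 ≤ (2 * (‖v‖ / ‖u‖) + 2 * |A w.1|) * ‖u‖ ^ 2 :=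
    calc |lam.im| * ‖u‖ ^ 2 ≤ |lam.im| * ∑ i, ‖u i‖ ^ 2 := by
          gcongr; exact sq_norm_le_sum_sq_norm u
      _ = |lam.im * ∑ i, ‖u i‖ ^ 2| := by
          rw [abs_mul, abs_of_nonneg (a := ∑ i, ‖u i‖ ^ 2) (by positivity)]
      _ = |(star u ⬝ᵥ v).im + 2 * A w.1 * (star (u 0) * u 1).re| := by
          rw [im_star_dotProduct_zsSymbol_mulVec_sub_smul, ← abs_neg]
          ring_nf
      _ ≤ ‖star u ⬝ᵥ v‖ + 2 * |A w.1| * ‖star (u 0) * u 1‖ := by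
          refine (abs_add_le _ _).trans (add_le_add (abs_im_le_norm _) ?_)
          rw [abs_mul, abs_mul, abs_two]
          gcongr
          exact abs_re_le_norm _
      _ ≤ 2 * (‖u‖ * ‖v‖) + 2 * |A w.1| * ‖u‖ ^ 2 := by gcongr
      _ = (2 * (‖v‖ / ‖u‖) + 2 * |A w.1|) * ‖u‖ ^ 2 := by field_simp
  exact le_of_mul_le_mul_right key (by positivity)

lemma abs_snd_le_norm_zsSymbol_mulVec_sub_smul_div (hu : u ≠ 0) :
    |w.2| ≤ |S' w.1| / 2 + |lam.re| + |A w.1| + ‖zsSymbol A S' w *ᵥ u - lam • u‖ / ‖u‖ := by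
  set v := zsSymbol A S' w *ᵥ u - lam • u with hv
  set m := |w.2| - |S' w.1| / 2 - |lam.re| with hm
  have hrow (c : ℂ) (i j : Fin 2) (hc : m ≤ ‖c‖) (hcu : c * u i = v i + I * A w.1 * u j) :
      m * ‖u i‖ ≤ ‖v‖ + |A w.1| * ‖u‖ :=
    calc m * ‖u i‖ ≤ ‖c * u i‖ := by rw [norm_mul]; gcongr
      _ ≤ ‖v i‖ + |A w.1| * ‖u j‖ := by
          rw [hcu]
          refine (norm_add_le _ _).trans_eq ?_
          simp
      _ ≤ ‖v‖ + |A w.1| * ‖u‖ := by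
          gcongr
          exacts [norm_le_pi_norm v i, norm_le_pi_norm u j]
  have hrow0 : m * ‖u 0‖ ≤ ‖v‖ + |A w.1| * ‖u‖ := by
    refine hrow (-(w.2 : ℂ) - S' w.1 / 2 - lam) 0 1 ?_ ?_
    · calc m = |-w.2| - |S' w.1| / 2 - |lam.re| := by rw [abs_neg]
        _ ≤ |-w.2 - S' w.1 / 2 - lam.re| := abs_sub_half_abs_sub_abs_le _ _ _
        _ ≤ _ := by simpa using abs_re_le_norm (-(w.2 : ℂ) - S' w.1 / 2 - lam)
    · rw [hv, zsSymbol_mulVec_sub_smul_zero]; ring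
  have hrow1 : m * ‖u 1‖ ≤ ‖v‖ + |A w.1| * ‖u‖ := by
    refine hrow ((w.2 : ℂ) - S' w.1 / 2 - lam) 1 0 ?_ ?_
    · calc m ≤ |w.2 - S' w.1 / 2 - lam.re| := abs_sub_half_abs_sub_abs_le _ _ _
        _ ≤ _ := by simpa using abs_re_le_norm ((w.2 : ℂ) - S' w.1 / 2 - lam)
    · rw [hv, zsSymbol_mulVec_sub_smul_one]; ring
  obtain ⟨i, hi : ‖u i‖ = ‖u‖⟩ := (IsGreatest.pi_norm u).1
  have hmax : m * ‖u‖ ≤ ‖v‖ + |A w.1| * ‖u‖ := by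
    rw [← hi] at hrow0 hrow1 ⊢
    fin_cases i
    exacts [hrow0, hrow1]
  have : m - |A w.1| ≤ ‖v‖ / ‖u‖ := by
    rw [le_div_iff₀ (norm_pos_iff.2 hu)]
    linarith
  linarith

end ZakharovShabat

theorem stmt_18_general (A S : ℝ → ℝ)
    (MA : ℝ) (hMA : ∀ x, |A x| ≤ MA)
    (hAdecay : Tendsto A (cocompact ℝ) (𝓝 0))
    (MS : ℝ) (hMS : ∀ x, |deriv S x| ≤ MS)
    (lam : ℂ) (him : lam.im ≠ 0) :
    ¬ ∃ (w : ℕ → ℝ × ℝ) (u : ℕ → (Fin 2 → ℂ)),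
        (∀ j, u j ≠ 0)
        ∧ Tendsto (fun j => ‖w j‖) atTop atTop
        ∧ Tendsto
            (fun j => ‖(zsSymbol A (deriv S) (w j)).mulVec (u j) - lam • (u j)‖ / ‖u j‖)
            atTop (𝓝 0) := by
  rintro ⟨w, u, hu, hw, hr⟩
  have hξ : ∀ᶠ j in atTop, ‖(w j).2‖ ≤ MS / 2 + |lam.re| + MA + 1 := by
    filter_upwards [hr.eventually (gt_mem_nhds one_pos)] with j hj
    rw [Real.norm_eq_abs]
    linarith [abs_snd_le_norm_zsSymbol_mulVec_sub_smul_div A (deriv S) lam (w j) (hu j),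
      hMS (w j).1, hMA (w j).1]
  have hA : Tendsto (fun j => A (w j).1) atTop (𝓝 0) :=
    hAdecay.comp (tendsto_fst_cocompact_of_tendsto_norm hw hξ)
  have hbound := (hr.const_mul 2).add (hA.abs.const_mul 2)
  simp only [mul_zero, abs_zero, add_zero] at hbound
  have him_le : |lam.im| ≤ 0 :=
    ge_of_tendsto' hbound fun j ↦
      abs_im_le_norm_zsSymbol_mulVec_sub_smul_div A (deriv S) lam (w j) (hu j)
  exact him (abs_nonpos_iff.1 him_le)

theorem stmt_18 (A S : ℝ → ℝ)
    (hAcont : Continuous A) (hApos : ∀ x, 0 < A x)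
    (MA : ℝ) (hMA : ∀ x, |A x| ≤ MA)
    (hAdecay : Tendsto A (cocompact ℝ) (𝓝 0))
    (hS'cont : Continuous (deriv S)) (MS : ℝ) (hMS : ∀ x, |deriv S x| ≤ MS)
    (lam : ℂ) (him : lam.im ≠ 0) :
    ¬ ∃ (w : ℕ → ℝ × ℝ) (u : ℕ → (Fin 2 → ℂ)),
        (∀ j, u j ≠ 0)
        ∧ Tendsto (fun j => ‖w j‖) atTop atTop
        ∧ Tendsto
            (fun j => ‖(zsSymbol A (deriv S) (w j)).mulVec (u j) - lam • (u j)‖ / ‖u j‖)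
            atTop (𝓝 0) :=
  stmt_18_general A S MA hMA hAdecay MS hMS lam him
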